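/- Let [T1,T1'] be a Tamari interval of size n with interval-poset I1 = IP[T1,T1'], and let I be an interval-poset of size n. Then I = IP[T2,T1'] for some binary tree T2 with T1 ≤ T2 ≤ T1' if and only if every relation of I1 is a relation of I and every relation of I not in I1 is decreasing. Symmetrically, I = IP[T1,T3] for some binary tree T3 with T1 ≤ T3 ≤ T1' if and only if every relation of I1 is a relation of I and every relation of I not in I1 is increasing. -/

import Mathlib

open Polynomial

/-- A binary tree: either the empty tree or a pair of binary trees
(left and right subtrees) grafted on an internal node. -/
inductive BinTree : Type
  | leaf : BinTree
  | node : BinTree → BinTree → BinTree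

namespace BinTree

/-- The size of a binary tree: its number of internal nodes. -/
def size : BinTree → ℕ
  | leaf => 0
  | node l r => l.size + r.size + 1

/-- One right rotation somewhere in the tree: `Rot T T'` means that `T'` is obtained
from `T` by replacing one subtree of the form `y(x(A,B),C)` by `x(A,y(B,C))`. -/
inductive Rot : BinTree → BinTree → Prop
  | root (A B C : BinTree) : Rot (node (node A B) C) (node A (node B C))
  | left {L L' : BinTree} (R : BinTree) : Rot L L' → Rot (node L R) (node L' R)
  | right (L : BinTree) {R R' : BinTree} : Rot R R' → Rot (node L R) (node L R')

/-- The Tamari order: `TamariLE T T'` iff `T'` is obtained from `T` by a (possibly empty)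
sequence of right rotations. -/
def TamariLE (T T' : BinTree) : Prop := Relation.ReflTransGen Rot T T'

/-- The Tamari polynomial `B_T ∈ ℤ[x]`: `B_∅ = 1` and for `T = x(L,R)`, `B_T` is the
unique polynomial with `(x-1)·B_T = x·B_L·(x·B_R - B_R(1))` (exact division by the
monic polynomial `X - 1`, the right-hand side vanishing at `x = 1`). -/
noncomputable def tamPoly : BinTree → Polynomial ℤ
  | leaf => 1
  | node l r =>
      (X * tamPoly l * (X * tamPoly r - C ((tamPoly r).eval 1))) /ₘ (X - C 1)

/-- The mirror Tamari polynomial, obtained by exchanging the roles of the left and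
right subtrees in the recursive definition of the Tamari polynomial. -/
noncomputable def tamPolyMirror : BinTree → Polynomial ℤ
  | leaf => 1
  | node l r =>
      (X * tamPolyMirror r * (X * tamPolyMirror l - C ((tamPolyMirror l).eval 1))) /ₘ (X - C 1)

/-- The number of nodes on the left border of a binary tree. -/
def leftBorder : BinTree → ℕ
  | leaf => 0
  | node l _ => l.leftBorder + 1

/-- The number of nodes on the right border of a binary tree. -/
def rightBorder : BinTree → ℕ
  | leaf => 0
  | node _ r => r.rightBorder + 1

/-- `inSub T a b`: in the unique binary-search-tree labelling of `T` by `1,…,size T`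
(all labels of the left subtree of a node are smaller than its label, all labels of its
right subtree are larger), the node labelled `a` belongs to the subtree rooted at the
node labelled `b` (in particular `inSub T a a` holds for every node label `a`). -/
def inSub : BinTree → ℕ → ℕ → Prop
  | leaf => fun _ _ => False
  | node l r => fun a b =>
      (b = l.size + 1 ∧ 1 ≤ a ∧ a ≤ l.size + r.size + 1) ∨
      inSub l a b ∨
      (l.size + 1 < a ∧ l.size + 1 < b ∧ inSub r (a - (l.size + 1)) (b - (l.size + 1)))

/-- The binary search tree poset of `T`: `bstRel T a b` iff `a ≺_T b`, i.e. `a ≠ b` and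
the node labelled `a` is in the subtree rooted at the node labelled `b`. -/
def bstRel (T : BinTree) (a b : ℕ) : Prop := a ≠ b ∧ inSub T a b

/-- The increasing forest `inc(T)`: `a ≺ b` iff `a < b` and `a ≺_T b`. -/
def incRel (T : BinTree) (a b : ℕ) : Prop := a < b ∧ bstRel T a b

/-- The decreasing forest `dec(T)`: `b ≺ a` iff `b > a` and `b ≺_T a`. -/
def decRel (T : BinTree) (a b : ℕ) : Prop := b < a ∧ bstRel T a b

/-- The relations of the interval-poset `IP[T,T']`: exactly those of `dec(T)`
together with those of `inc(T')`. -/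
def IPrel (T T' : BinTree) (a b : ℕ) : Prop := decRel T a b ∨ incRel T' a b

end BinTree

open BinTree

/-- `σ` is a linear extension of the strict relation `rel` on `{1,…,n}`: reading the word
`σ(1)…σ(n)` (the `i`-th letter being the label `(σ i : ℕ) + 1`), whenever `rel a b` holds
the letter `a` appears before the letter `b`. -/
def IsLinExt (n : ℕ) (rel : ℕ → ℕ → Prop) (σ : Equiv.Perm (Fin n)) : Prop :=
  ∀ i j : Fin n, rel ((σ i : ℕ) + 1) ((σ j : ℕ) + 1) → i < j

/-- An interval-poset of size `n`: a (strict) poset on `{1,…,n}` such that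
`a ≺ c` implies `b ≺ c` for all `a < b < c`, and `c ≺ a` implies `b ≺ a` for all
`a < b < c`. -/
def IsIntervalPoset (n : ℕ) (rel : ℕ → ℕ → Prop) : Prop :=
  (∀ a b, rel a b → 1 ≤ a ∧ a ≤ n ∧ 1 ≤ b ∧ b ≤ n) ∧
  (∀ a, ¬ rel a a) ∧
  (∀ a b c, rel a b → rel b c → rel a c) ∧
  (∀ a b c, a < b → b < c → rel a c → rel b c) ∧
  (∀ a b c, a < b → b < c → rel c a → rel b a)

/-- `trees(P)` : the number of connected components of the forest formed by the decreasing
relations of `P`, i.e. the number of `k ∈ {1,…,n}` such that there is no `j < k`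
with `k ≺_P j`. -/
noncomputable def treeStat (n : ℕ) (rel : ℕ → ℕ → Prop) : ℕ :=
  Set.ncard {k : ℕ | 1 ≤ k ∧ k ≤ n ∧ ∀ j, j < k → ¬ rel k j}

/-- The composition `𝔹(I1,I2)` of two interval-posets of sizes `k1` and `k2`:
the set of interval-posets `I` of size `k1+k2+1` such that
(i) the relations of `I` among `1,…,k1` are exactly those of `I1`,
(ii) the relations of `I` among `k1+2,…,k1+k2+1` are exactly those of `I2` shifted
by `k1+1`, (iii) `i ≺_I k1+1` for all `i ≤ k1`, and (iv) there is no relation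
`k1+1 ≺_I j` for `j > k1+1`. -/
def Comp (k1 k2 : ℕ) (I1 I2 : ℕ → ℕ → Prop) : Set (ℕ → ℕ → Prop) :=
  {I | IsIntervalPoset (k1 + k2 + 1) I ∧
    (∀ a b, 1 ≤ a → a ≤ k1 → 1 ≤ b → b ≤ k1 → (I a b ↔ I1 a b)) ∧
    (∀ a b, k1 + 2 ≤ a → a ≤ k1 + k2 + 1 → k1 + 2 ≤ b → b ≤ k1 + k2 + 1 →
      (I a b ↔ I2 (a - (k1 + 1)) (b - (k1 + 1)))) ∧
    (∀ i, 1 ≤ i → i ≤ k1 → I i (k1 + 1)) ∧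
    (∀ j, k1 + 1 < j → ¬ I (k1 + 1) j)}

/-- The co-inversions of a permutation `σ` of `{1,…,n}` (written as the word
`σ(1)…σ(n)`): pairs `(σ(i), σ(j))` with `i < j` and `σ(i) > σ(j)`. -/
def coinv (n : ℕ) (σ : Equiv.Perm (Fin n)) : Set (Fin n × Fin n) :=
  {p | ∃ i j : Fin n, i < j ∧ σ j < σ i ∧ p = (σ i, σ j)}

/-!
Label the nodes of a binary tree in infix order and let `rightSize T b` be the size of the right
subtree of node `b`. The decreasing relations of `IP[T, T']` are the `a ≺ b` with
`b < a ≤ b + rightSize T b`, and `T ≤ T'` in the Tamari order exactly when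
`rightSize T ≤ rightSize T'` pointwise: a rotation increases one entry, and conversely one can
always rotate from `T` towards any pointwise larger admissible vector.

If `I ⊇ IP[T1, T1']` has only decreasing new relations, the ends `b + k` of the longest decreasing
relations `b + k ≺_I b` form an admissible vector squeezed between `rightSize T1` and
`rightSize T1'`; the tree realising it is the required `T2`. The statement about `T3` is the
mirror image: mirroring trees and reversing `{1, …, n}` swaps increasing and decreasing relations
and reverses the Tamari order.
-/

section Reflect

def IsRelOn (n : ℕ) (R : ℕ → ℕ → Prop) : Prop :=
  ∀ a b, R a b → 1 ≤ a ∧ a ≤ n ∧ 1 ≤ b ∧ b ≤ n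

def reflectRel (n : ℕ) (R : ℕ → ℕ → Prop) (a b : ℕ) : Prop :=
  R (n + 1 - a) (n + 1 - b)

variable {n : ℕ} {R S : ℕ → ℕ → Prop}

lemma reflectRel_reflectRel (hR : IsRelOn n R) : reflectRel n (reflectRel n R) = R := by
  funext a b
  apply propext
  change R (n + 1 - (n + 1 - a)) (n + 1 - (n + 1 - b)) ↔ R a b
  constructor
  · intro h
    have := hR _ _ h
    rwa [Nat.sub_sub_self (by omega), Nat.sub_sub_self (by omega)] at h
  · intro h
    have := hR _ _ h
    rwa [Nat.sub_sub_self (by omega), Nat.sub_sub_self (by omega)]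

lemma IsIntervalPoset.reflectRel (hR : IsIntervalPoset n R) :
    IsIntervalPoset n (reflectRel n R) := by
  obtain ⟨hbd, hirr, htrans, hinc, hdec⟩ := hR
  refine ⟨fun a b h => ?_, fun a => hirr _, fun a b c => htrans _ _ _,
    fun a b c hab hbc h => ?_, fun a b c hab hbc h => ?_⟩
  · have := hbd _ _ h; omega
  · have := hbd _ _ h; exact hdec _ _ _ (by omega) (by omega) h
  · have := hbd _ _ h; exact hinc _ _ _ (by omega) (by omega) h

lemma forall_reflectRel_imp_reflectRel_iff (hR : IsRelOn n R) (hS : IsRelOn n S) :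
    (∀ a b, reflectRel n R a b → reflectRel n S a b) ↔ ∀ a b, R a b → S a b := by
  refine ⟨fun h => ?_, fun h a b => h _ _⟩
  have h' : ∀ a b, reflectRel n (reflectRel n R) a b → reflectRel n (reflectRel n S) a b :=
    fun a b => h _ _
  rwa [reflectRel_reflectRel hR, reflectRel_reflectRel hS] at h'

lemma forall_reflectRel_iff_reflectRel_iff (hR : IsRelOn n R) (hS : IsRelOn n S) :
    (∀ a b, reflectRel n R a b ↔ reflectRel n S a b) ↔ ∀ a b, R a b ↔ S a b := by
  simp only [iff_iff_implies_and_implies, forall_and,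
    forall_reflectRel_imp_reflectRel_iff hR hS, forall_reflectRel_imp_reflectRel_iff hS hR]

lemma forall_reflectRel_not_imp_lt_iff (hR : IsRelOn n R) (hS : IsRelOn n S) :
    (∀ a b, reflectRel n R a b → ¬ reflectRel n S a b → b < a) ↔
      ∀ a b, R a b → ¬ S a b → a < b := by
  constructor
  · intro h a b hab hnew
    have h' : ∀ a b, reflectRel n (reflectRel n R) a b →
        ¬ reflectRel n (reflectRel n S) a b → n + 1 - b < n + 1 - a := fun a b => h _ _
    rw [reflectRel_reflectRel hR, reflectRel_reflectRel hS] at h'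
    have := h' a b hab hnew
    have := hR a b hab
    omega
  · intro h a b hab hnew
    have := h _ _ hab hnew
    have := hR _ _ hab
    omega

end Reflect

namespace BinTree

/-- The size of the right subtree of the node labelled `b` (and `0` if `b` is not a label). -/
def rightSize : BinTree → ℕ → ℕ
  | leaf, _ => 0
  | node l r, b =>
      if b < l.size + 1 then rightSize l b
      else if b = l.size + 1 then r.size
      else rightSize r (b - (l.size + 1))

lemma rightSize_node_of_lt {l r : BinTree} {b : ℕ} (h : b < l.size + 1) :
    rightSize (node l r) b = rightSize l b := by
  simp [rightSize, h]

lemma rightSize_node_self (l r : BinTree) : rightSize (node l r) (l.size + 1) = r.size := by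
  simp [rightSize]

lemma rightSize_node_of_gt {l r : BinTree} {b : ℕ} (h : l.size + 1 < b) :
    rightSize (node l r) b = rightSize r (b - (l.size + 1)) := by
  rw [rightSize, if_neg (by omega), if_neg (by omega)]

lemma bounds_of_inSub {T : BinTree} {a b : ℕ} (h : inSub T a b) :
    1 ≤ a ∧ a ≤ T.size ∧ 1 ≤ b ∧ b ≤ T.size := by
  induction T generalizing a b with
  | leaf => exact h.elim
  | node l r ihl ihr =>
    simp only [inSub, size] at h ⊢
    rcases h with ⟨hb, ha⟩ | h | ⟨ha, hb, h⟩
    · omega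
    · have := ihl h; omega
    · have := ihr h; omega

lemma add_rightSize_le_size {T : BinTree} {b : ℕ} (h : b ≤ T.size) :
    b + rightSize T b ≤ T.size := by
  induction T generalizing b with
  | leaf => simpa [rightSize] using h
  | node l r ihl ihr =>
    simp only [size] at h ⊢
    rcases lt_trichotomy b (l.size + 1) with hb | rfl | hb
    · rw [rightSize_node_of_lt hb]; have := ihl (b := b) (by omega); omega
    · rw [rightSize_node_self]; omega
    · rw [rightSize_node_of_gt hb]; have := ihr (b := b - (l.size + 1)) (by omega); omega

lemma inSub_iff_of_lt {T : BinTree} {a b : ℕ} (hba : b < a) :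
    inSub T a b ↔ 1 ≤ b ∧ a ≤ b + rightSize T b := by
  induction T generalizing a b with
  | leaf => simp only [inSub, rightSize, false_iff]; omega
  | node l r ihl ihr =>
    simp only [inSub]
    rcases lt_trichotomy b (l.size + 1) with hb | rfl | hb
    · rw [rightSize_node_of_lt hb, ← ihl hba]
      constructor
      · rintro (⟨hb', -⟩ | h | ⟨-, hb', -⟩)
        · omega
        · exact h
        · omega
      · exact fun h => Or.inr (Or.inl h)
    · rw [rightSize_node_self]
      constructor
      · rintro (⟨-, -, h⟩ | h | ⟨-, hb', -⟩)
        · omega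
        · have := bounds_of_inSub h; omega
        · omega
      · intro h; left; omega
    · rw [rightSize_node_of_gt hb]
      have key := ihr (a := a - (l.size + 1)) (b := b - (l.size + 1)) (by omega)
      constructor
      · rintro (⟨hb', -⟩ | h | ⟨-, -, h⟩)
        · omega
        · have := bounds_of_inSub h; omega
        · have := key.1 h; omega
      · exact fun h => Or.inr (Or.inr ⟨by omega, hb, key.2 ⟨by omega, by omega⟩⟩)

lemma decRel_iff {T : BinTree} {a b : ℕ} :
    decRel T a b ↔ b < a ∧ 1 ≤ b ∧ a ≤ b + rightSize T b := by
  constructor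
  · rintro ⟨hba, -, h⟩
    exact ⟨hba, (inSub_iff_of_lt hba).1 h⟩
  · rintro ⟨hba, h⟩
    exact ⟨hba, by omega, (inSub_iff_of_lt hba).2 h⟩

lemma add_rightSize_le_of_inSub {T : BinTree} {a b : ℕ} (h : inSub T a b) :
    a + rightSize T a ≤ b + rightSize T b := by
  induction T generalizing a b with
  | leaf => exact h.elim
  | node l r ihl ihr =>
    rcases h with ⟨rfl, -, ha⟩ | h | ⟨ha, hb, h⟩
    · rw [rightSize_node_self]
      have := add_rightSize_le_size (T := node l r) (b := a) (by simpa [size] using ha)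
      simp only [size] at this; omega
    · have := bounds_of_inSub h
      rw [rightSize_node_of_lt (by omega), rightSize_node_of_lt (by omega)]
      exact ihl h
    · rw [rightSize_node_of_gt ha, rightSize_node_of_gt hb]
      have := ihr h
      omega

lemma eq_of_inSub_of_inSub {T : BinTree} {a b : ℕ} (hab : inSub T a b) (hba : inSub T b a) :
    a = b := by
  induction T generalizing a b with
  | leaf => exact hab.elim
  | node l r ihl ihr =>
    rcases hab with ⟨rfl, -⟩ | hab | ⟨ha, hb, hab⟩ <;>
      rcases hba with ⟨rfl, -⟩ | hba | ⟨hb', ha', hba⟩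
    all_goals first
      | rfl
      | omega
      | exact ihl hab hba
      | have := ihr hab hba; omega
      | have := bounds_of_inSub hab; omega
      | have := bounds_of_inSub hba; omega

lemma exists_common_ancestor {T : BinTree} {b c : ℕ} (hb : 1 ≤ b) (hbc : b ≤ c)
    (hc : c ≤ T.size) : ∃ z, b ≤ z ∧ z ≤ c ∧ inSub T b z ∧ inSub T c z := by
  induction T generalizing b c with
  | leaf => simp only [size] at hc; omega
  | node l r ihl ihr =>
    simp only [size] at hc
    by_cases hcl : c ≤ l.size
    · obtain ⟨z, hbz, hzc, hbsub, hcsub⟩ := ihl hb hbc hcl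
      exact ⟨z, hbz, hzc, Or.inr (Or.inl hbsub), Or.inr (Or.inl hcsub)⟩
    by_cases hbl : l.size + 1 < b
    · obtain ⟨z, hbz, hzc, hbsub, hcsub⟩ :=
        ihr (b := b - (l.size + 1)) (c := c - (l.size + 1)) (by omega) (by omega) (by omega)
      refine ⟨z + (l.size + 1), by omega, by omega, Or.inr (Or.inr ⟨by omega, by omega, ?_⟩),
        Or.inr (Or.inr ⟨by omega, by omega, ?_⟩)⟩ <;> simpa
    · exact ⟨l.size + 1, by omega, by omega, Or.inl ⟨rfl, by omega, by omega⟩,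
        Or.inl ⟨rfl, by omega, by omega⟩⟩

lemma inSub_of_forall_add_rightSize_lt {T : BinTree} {b y : ℕ} (hb : 1 ≤ b) (hby : b ≤ y)
    (hy : y ≤ T.size) (h : ∀ e, b ≤ e → e < y → e + rightSize T e < y) : inSub T b y := by
  obtain ⟨z, hbz, hzy, hbsub, hysub⟩ := exists_common_ancestor hb hby hy
  rcases hzy.eq_or_lt with rfl | hzy
  · exact hbsub
  · have := (inSub_iff_of_lt hzy).1 hysub
    have := h z hbz hzy
    omega

lemma eq_of_rightSize_eq : ∀ {T T' : BinTree}, T.size = T'.size →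
    (∀ b, 1 ≤ b → b ≤ T.size → rightSize T b = rightSize T' b) → T = T'
  | leaf, leaf, _, _ => rfl
  | leaf, node _ _, hs, _ | node _ _, leaf, hs, _ => by simp only [size] at hs; omega
  | node l r, node l' r', hs, h => by
    simp only [size] at hs
    have hl : l.size = l'.size := by
      by_contra hne
      wlog hlt : l.size < l'.size generalizing l r l' r'
      · exact this l' r' l r hs.symm
          (fun b hb1 hb2 => (h b hb1 (by simp only [size] at *; omega)).symm) (Ne.symm hne)
          (by omega)
      have hroot := h (l.size + 1) (by omega) (by simp only [size]; omega)
      rw [rightSize_node_self, rightSize_node_of_lt (by omega)] at hroot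
      have := add_rightSize_le_size (T := l') (b := l.size + 1) (by omega)
      omega
    have hleft : l = l' := eq_of_rightSize_eq hl fun b hb1 hb2 => by
      have := h b hb1 (by simp only [size]; omega)
      rwa [rightSize_node_of_lt (by omega), rightSize_node_of_lt (by omega)] at this
    have hright : r = r' := eq_of_rightSize_eq (by omega) fun b hb1 hb2 => by
      have := h (b + (l.size + 1)) (by omega) (by simp only [size]; omega)
      rwa [rightSize_node_of_gt (by omega), rightSize_node_of_gt (by omega), hl,
        Nat.add_sub_cancel] at this
    rw [hleft, hright]

lemma Rot.size_eq {T T' : BinTree} (h : Rot T T') : T'.size = T.size := by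
  induction h <;> simp only [size] <;> omega

lemma rightSize_rotate_of_ne (A B C : BinTree) {c : ℕ} (hc : c ≠ A.size + 1) :
    rightSize (node A (node B C)) c = rightSize (node (node A B) C) c := by
  have hAB : (node A B).size = A.size + B.size + 1 := rfl
  rcases lt_or_gt_of_ne hc with hc | hc
  · rw [rightSize_node_of_lt hc, rightSize_node_of_lt (by omega), rightSize_node_of_lt hc]
  rw [rightSize_node_of_gt hc]
  rcases lt_trichotomy c (A.size + B.size + 2) with hc' | rfl | hc'
  · rw [rightSize_node_of_lt (by omega), rightSize_node_of_lt (by omega),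
      rightSize_node_of_gt hc]
  · rw [show A.size + B.size + 2 - (A.size + 1) = B.size + 1 by omega, rightSize_node_self,
      show A.size + B.size + 2 = (node A B).size + 1 by omega, rightSize_node_self]
  · rw [rightSize_node_of_gt (by omega), rightSize_node_of_gt (by omega), hAB,
      Nat.sub_sub, show A.size + 1 + (B.size + 1) = A.size + B.size + 1 + 1 by omega]

lemma Rot.rightSize_le {T T' : BinTree} (h : Rot T T') (c : ℕ) :
    rightSize T c ≤ rightSize T' c := by
  induction h generalizing c with
  | root A B C =>
    by_cases hc : c = A.size + 1
    · subst hc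
      rw [rightSize_node_of_lt (by simp only [size]; omega), rightSize_node_self,
        rightSize_node_self]
      simp only [size]; omega
    · rw [rightSize_rotate_of_ne A B C hc]
  | @left L L' R hL ih =>
    have hs := hL.size_eq
    rcases lt_trichotomy c (L.size + 1) with hc | rfl | hc
    · rw [rightSize_node_of_lt hc, rightSize_node_of_lt (by omega)]; exact ih c
    · rw [rightSize_node_self, ← hs, rightSize_node_self]
    · rw [rightSize_node_of_gt hc, rightSize_node_of_gt (by omega), hs]
  | @right L R R' hR ih =>
    rcases lt_trichotomy c (L.size + 1) with hc | rfl | hc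
    · rw [rightSize_node_of_lt hc, rightSize_node_of_lt hc]
    · rw [rightSize_node_self, rightSize_node_self, hR.size_eq]
    · rw [rightSize_node_of_gt hc, rightSize_node_of_gt hc]; exact ih _

lemma TamariLE.rightSize_le {T T' : BinTree} (h : TamariLE T T') (c : ℕ) :
    rightSize T c ≤ rightSize T' c := by
  induction h with
  | refl => exact le_rfl
  | tail _ hr ih => exact ih.trans (hr.rightSize_le c)

/-- `T'` is obtained from `T` by the right rotation at the node `y`, which lifts the left
child `x` of `y`. -/
structure IsRotationAt (T T' : BinTree) (x y : ℕ) : Prop where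
  rot : Rot T T'
  one_le : 1 ≤ x
  add_rightSize_add_one : x + rightSize T x + 1 = y
  inSub_left : ∀ c, c < y → inSub T c y → inSub T c x
  rightSize_of_ne : ∀ c, c ≠ x → rightSize T' c = rightSize T c
  add_rightSize_rotated : x + rightSize T' x = y + rightSize T y

lemma isRotationAt_root (A B C : BinTree) :
    IsRotationAt (node (node A B) C) (node A (node B C)) (A.size + 1)
      ((node A B).size + 1) where
  rot := Rot.root A B C
  one_le := by omega
  add_rightSize_add_one := by
    rw [rightSize_node_of_lt (by simp only [size]; omega), rightSize_node_self]
    simp only [size]; omega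
  inSub_left c hc hsub := by
    have := bounds_of_inSub hsub
    exact Or.inr (Or.inl (Or.inl ⟨rfl, by omega, by simp only [size] at hc; omega⟩))
  rightSize_of_ne c hc := rightSize_rotate_of_ne A B C hc
  add_rightSize_rotated := by
    rw [rightSize_node_self, rightSize_node_self]; simp only [size]; omega

lemma IsRotationAt.node_left {L L' : BinTree} {x y : ℕ} (h : IsRotationAt L L' x y)
    (hy : y ≤ L.size) (R : BinTree) : IsRotationAt (node L R) (node L' R) x y where
  rot := Rot.left R h.rot
  one_le := h.one_le
  add_rightSize_add_one := by
    have := h.add_rightSize_add_one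
    rw [rightSize_node_of_lt (by omega)]; exact this
  inSub_left c hc := by
    rintro (⟨rfl, -⟩ | hsub | ⟨-, hy', -⟩)
    · omega
    · exact Or.inr (Or.inl (h.inSub_left c hc hsub))
    · omega
  rightSize_of_ne c hc := by
    have hs := h.rot.size_eq
    rcases lt_trichotomy c (L.size + 1) with hc' | rfl | hc'
    · rw [rightSize_node_of_lt hc', rightSize_node_of_lt (by omega)]; exact h.rightSize_of_ne c hc
    · rw [rightSize_node_self, ← hs, rightSize_node_self]
    · rw [rightSize_node_of_gt hc', rightSize_node_of_gt (by omega), hs]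
  add_rightSize_rotated := by
    have := h.add_rightSize_add_one
    have := h.rot.size_eq
    rw [rightSize_node_of_lt (by omega), rightSize_node_of_lt (by omega)]
    exact h.add_rightSize_rotated

lemma IsRotationAt.node_right {R R' : BinTree} {x y : ℕ} (h : IsRotationAt R R' x y)
    (L : BinTree) :
    IsRotationAt (node L R) (node L R') (x + (L.size + 1)) (y + (L.size + 1)) := by
  have hx := h.one_le
  have hxy := h.add_rightSize_add_one
  refine ⟨Rot.right L h.rot, by omega, ?_, ?_, ?_, ?_⟩
  · rw [rightSize_node_of_gt (by omega), Nat.add_sub_cancel]; omega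
  · rintro c hc (⟨hy, -⟩ | hsub | ⟨hc', -, hsub⟩)
    · omega
    · have := bounds_of_inSub hsub; omega
    · rw [Nat.add_sub_cancel] at hsub
      refine Or.inr (Or.inr ⟨hc', by omega, ?_⟩)
      rw [Nat.add_sub_cancel]
      exact h.inSub_left _ (by omega) hsub
  · intro c hc
    rcases lt_trichotomy c (L.size + 1) with hc' | rfl | hc'
    · rw [rightSize_node_of_lt hc', rightSize_node_of_lt hc']
    · rw [rightSize_node_self, rightSize_node_self, h.rot.size_eq]
    · rw [rightSize_node_of_gt hc', rightSize_node_of_gt hc']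
      exact h.rightSize_of_ne _ (by omega)
  · rw [rightSize_node_of_gt (by omega), rightSize_node_of_gt (by omega), Nat.add_sub_cancel,
      Nat.add_sub_cancel]
    have := h.add_rightSize_rotated
    omega

lemma exists_isRotationAt : ∀ {T : BinTree} {b y : ℕ}, b < y → inSub T b y →
    ∃ T' x, IsRotationAt T T' x y
  | leaf, _, _, _, hsub => hsub.elim
  | node l r, b, y, hby, hsub => by
    rcases hsub with ⟨rfl, hb, -⟩ | hsub | ⟨hbl, hyl, hsub⟩
    · cases l with
      | leaf => simp only [size] at hby; omega
      | node A B => exact ⟨_, _, isRotationAt_root A B r⟩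
    · obtain ⟨l', x, h⟩ := exists_isRotationAt hby hsub
      exact ⟨_, _, h.node_left (bounds_of_inSub hsub).2.2.2 r⟩
    · obtain ⟨r', x, h⟩ := exists_isRotationAt (by omega) hsub
      have h' := h.node_right l
      rw [Nat.sub_add_cancel hyl.le] at h'
      exact ⟨_, _, h'⟩

def IsBracketVector (n : ℕ) (f : ℕ → ℕ) : Prop :=
  (∀ b, 1 ≤ b → b ≤ n → b + f b ≤ n) ∧
    ∀ b c, 1 ≤ b → b < c → c ≤ b + f b → c + f c ≤ b + f b

lemma isBracketVector_rightSize (T : BinTree) : IsBracketVector T.size (rightSize T) :=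
  ⟨fun _ _ hb => add_rightSize_le_size hb, fun _ _ hb hbc hc =>
    add_rightSize_le_of_inSub ((inSub_iff_of_lt hbc).2 ⟨hb, hc⟩)⟩

/-- If `rightSize T ≤ f` with a strict inequality at `b`, rotating at the node `y` that
follows the subtree of `b` increases `rightSize T` at the left child `x ≤ b` of `y`
without exceeding `f`. -/
lemma exists_rot_rightSize_le {f : ℕ → ℕ} {T : BinTree} (hf : IsBracketVector T.size f)
    (hle : ∀ c, 1 ≤ c → c ≤ T.size → rightSize T c ≤ f c) {b : ℕ} (hb : 1 ≤ b)
    (hbn : b ≤ T.size) (hlt : rightSize T b < f b) :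
    ∃ T' x, Rot T T' ∧ 1 ≤ x ∧ x ≤ T.size ∧ rightSize T x < rightSize T' x ∧
      ∀ c, 1 ≤ c → c ≤ T.size → rightSize T' c ≤ f c := by
  obtain ⟨hfn, hfnest⟩ := hf
  set y := b + rightSize T b + 1
  have hyf : y ≤ b + f b := by omega
  have hyn : y ≤ T.size := hyf.trans (hfn b hb hbn)
  have hby : inSub T b y := inSub_of_forall_add_rightSize_lt hb (by omega) hyn fun e hbe hey => by
    rcases hbe.eq_or_lt with rfl | hbe
    · omega
    · have := add_rightSize_le_of_inSub ((inSub_iff_of_lt (T := T) hbe).2 ⟨hb, by omega⟩)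
      omega
  obtain ⟨T', x, hrot⟩ := exists_isRotationAt (show b < y by omega) hby
  have hx := hrot.one_le
  have hxy := hrot.add_rightSize_add_one
  have hxb : x ≤ b := by
    by_contra! hbx
    have hxb : inSub T x b := (inSub_iff_of_lt hbx).2 ⟨hb, by omega⟩
    have := eq_of_inSub_of_inSub hxb (hrot.inSub_left b (by omega) hby)
    omega
  have hxf : rightSize T' x ≤ f x := by
    have hfy : y + f y ≤ b + f b := hfnest b y hb (by omega) hyf
    have hfb : b + f b ≤ x + f x := by
      rcases hxb.eq_or_lt with rfl | hxb
      · rfl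
      · exact hfnest x b hx hxb (by have := hle x hx (by omega); omega)
    have := hle y (by omega) hyn
    have := hrot.add_rightSize_rotated
    omega
  refine ⟨T', x, hrot.rot, hx, by omega, by have := hrot.add_rightSize_rotated; omega,
    fun c hc hcn => ?_⟩
  by_cases hcx : c = x
  · exact hcx ▸ hxf
  · rw [hrot.rightSize_of_ne c hcx]; exact hle c hc hcn

lemma exists_tamariLE_rightSize_eq {n : ℕ} {f : ℕ → ℕ} (hf : IsBracketVector n f)
    {T : BinTree} (hT : T.size = n) (hle : ∀ b, 1 ≤ b → b ≤ n → rightSize T b ≤ f b) :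
    ∃ T', T'.size = n ∧ TamariLE T T' ∧
      ∀ b, 1 ≤ b → b ≤ n → rightSize T' b = f b := by
  rcases em (∃ b, 1 ≤ b ∧ b ≤ n ∧ rightSize T b < f b) with ⟨b, hb, hbn, hlt⟩ | hnone
  · obtain ⟨T', x, hrot, hx, hxn, hxlt, hle'⟩ :=
      exists_rot_rightSize_le (hT ▸ hf) (hT ▸ hle) hb (hT ▸ hbn) hlt
    obtain ⟨T'', hs, hT'', heq⟩ :=
      exists_tamariLE_rightSize_eq hf (hrot.size_eq.trans hT) (hT ▸ hle')
    exact ⟨T'', hs, .head hrot hT'', heq⟩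
  · exact ⟨T, hT, .refl, fun b hb hbn =>
      le_antisymm (hle b hb hbn) (not_lt.1 fun hlt => hnone ⟨b, hb, hbn, hlt⟩)⟩
termination_by ∑ b ∈ Finset.Icc 1 n, (f b - rightSize T b)
decreasing_by
  subst hT
  refine Finset.sum_lt_sum (fun c _ => ?_) ⟨x, Finset.mem_Icc.2 ⟨hx, hxn⟩, ?_⟩
  · have := hrot.rightSize_le c; omega
  · have := hle' x hx hxn; omega

lemma tamariLE_of_rightSize_le {T T' : BinTree} (hs : T.size = T'.size)
    (h : ∀ b, 1 ≤ b → b ≤ T.size → rightSize T b ≤ rightSize T' b) : TamariLE T T' := by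
  obtain ⟨T'', hs'', hT, heq⟩ :=
    exists_tamariLE_rightSize_eq (hs ▸ isBracketVector_rightSize T') rfl h
  rwa [eq_of_rightSize_eq (hs''.trans hs) fun b hb hbn => heq b hb (by omega)] at hT

lemma decRel_of_tamariLE {T T' : BinTree} (h : TamariLE T T') {a b : ℕ} (hab : decRel T a b) :
    decRel T' a b := by
  rw [decRel_iff] at hab ⊢
  have := h.rightSize_le b
  omega

section IntervalPoset

open Classical

noncomputable def decSpan (n : ℕ) (I : ℕ → ℕ → Prop) (b : ℕ) : ℕ :=
  Nat.findGreatest (fun k => I (b + k) b) n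

variable {n : ℕ} {I : ℕ → ℕ → Prop}

lemma rel_add_decSpan {b : ℕ} (h : decSpan n I b ≠ 0) : I (b + decSpan n I b) b :=
  Nat.findGreatest_of_ne_zero (P := fun k => I (b + k) b) rfl h

lemma rel_iff_le_add_decSpan (hI : IsIntervalPoset n I) {a b : ℕ} (hba : b < a) :
    I a b ↔ 1 ≤ b ∧ a ≤ b + decSpan n I b := by
  constructor
  · intro hab
    obtain ⟨-, han, hb, -⟩ := hI.1 a b hab
    have : a - b ≤ decSpan n I b :=
      Nat.le_findGreatest (by omega) (by rwa [Nat.add_sub_cancel' hba.le])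
    omega
  · rintro ⟨-, hab⟩
    have hspan := rel_add_decSpan (n := n) (I := I) (b := b) (by omega)
    rcases hab.eq_or_lt with rfl | hab
    · exact hspan
    · exact hI.2.2.2.2 b a _ hba hab hspan

lemma isBracketVector_decSpan (hI : IsIntervalPoset n I) : IsBracketVector n (decSpan n I) := by
  refine ⟨fun b _ hbn => ?_, fun b c hb hbc hcb => ?_⟩
  · by_cases h0 : decSpan n I b = 0
    · omega
    · exact (hI.1 _ _ (rel_add_decSpan h0)).2.1
  · by_cases h0 : decSpan n I c = 0
    · omega
    · have hcb := hI.2.2.1 _ _ _ (rel_add_decSpan h0)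
        ((rel_iff_le_add_decSpan hI hbc).2 ⟨hb, hcb⟩)
      exact ((rel_iff_le_add_decSpan hI (by omega)).1 hcb).2

lemma rightSize_le_decSpan (hI : IsIntervalPoset n I) {T : BinTree}
    (h : ∀ a b, decRel T a b → I a b) {b : ℕ} (hb : 1 ≤ b) :
    rightSize T b ≤ decSpan n I b := by
  by_cases h0 : rightSize T b = 0
  · omega
  · have := h (b + rightSize T b) b (decRel_iff.2 ⟨by omega, hb, le_rfl⟩)
    have := ((rel_iff_le_add_decSpan hI (by omega)).1 this).2
    omega

/-- The relation `b + decSpan n I b ≺_I b` forces this node into the right subtree of `b` in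
`T`: otherwise an increasing relation `b ≺ z` of `T` with `b < z ≤ b + decSpan n I b` would
close a cycle in `I`. -/
lemma decSpan_le_rightSize (hI : IsIntervalPoset n I) {T : BinTree} (hT : T.size = n)
    (h : ∀ a b, incRel T a b → I a b) {b : ℕ} (hb : 1 ≤ b) :
    decSpan n I b ≤ rightSize T b := by
  obtain ⟨hbd, hirr, htrans, -, hdec⟩ := hI
  by_cases h0 : decSpan n I b = 0
  · omega
  set c := b + decSpan n I b
  have hcb : I c b := rel_add_decSpan h0
  obtain ⟨z, hbz, hzc, hbsub, hcsub⟩ :=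
    exists_common_ancestor (T := T) hb (show b ≤ c by omega) (hT ▸ (hbd c b hcb).2.1)
  rcases hbz.eq_or_lt with rfl | hbz
  · have := (inSub_iff_of_lt (show b < c by omega)).1 hcsub
    omega
  · have hbz' : I b z := h b z ⟨hbz, hbz.ne, hbsub⟩
    rcases hzc.eq_or_lt with rfl | hzc
    · exact absurd (htrans _ _ _ hbz' hcb) (hirr b)
    · exact absurd (htrans _ _ _ hbz' (hdec b z c hbz hzc hcb)) (hirr b)

end IntervalPoset

theorem exists_lower_IPrel_iff {n : ℕ} {T1 T1' : BinTree} (h1 : T1.size = n)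
    (h1' : T1'.size = n) {I : ℕ → ℕ → Prop} (hI : IsIntervalPoset n I) :
    (∃ T2 : BinTree, T2.size = n ∧ TamariLE T1 T2 ∧ TamariLE T2 T1' ∧
        ∀ a b, I a b ↔ IPrel T2 T1' a b) ↔
      ((∀ a b, IPrel T1 T1' a b → I a b) ∧
        ∀ a b, I a b → ¬ IPrel T1 T1' a b → b < a) := by
  constructor
  · rintro ⟨T2, -, ht12, -, hrel⟩
    refine ⟨fun a b h => (hrel a b).2 (h.imp (decRel_of_tamariLE ht12) id),
      fun a b hab hnew => ?_⟩
    rcases (hrel a b).1 hab with h | h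
    · exact h.1
    · exact absurd (Or.inr h) hnew
  rintro ⟨hsub, hnew⟩
  obtain ⟨T2, hs2, ht12, hT2⟩ := exists_tamariLE_rightSize_eq (isBracketVector_decSpan hI) h1
    fun b hb _ => rightSize_le_decSpan hI (fun a b h => hsub a b (Or.inl h)) hb
  have ht21' : TamariLE T2 T1' := tamariLE_of_rightSize_le (hs2.trans h1'.symm) fun b hb hbn =>
    (hT2 b hb (by omega)).trans_le
      (decSpan_le_rightSize hI h1' (fun a b h => hsub a b (Or.inr h)) hb)
  refine ⟨T2, hs2, ht12, ht21', fun a b => ?_⟩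
  rcases lt_trichotomy a b with hab | rfl | hba
  · have hnd : ¬ decRel T2 a b := fun h => by have := h.1; omega
    simp only [IPrel, hnd, false_or]
    refine ⟨fun h => ?_, fun h => hsub a b (Or.inr h)⟩
    by_contra hni
    have := hnew a b h (by rintro (h | h); exacts [by have := h.1; omega, hni h])
    omega
  · simp only [IPrel, decRel, incRel, lt_irrefl, false_and, or_self, iff_false]
    exact hI.2.1 a
  · have hni : ¬ incRel T1' a b := fun h => by have := h.1; omega
    simp only [IPrel, hni, or_false]
    constructor
    · intro hab
      obtain ⟨-, -, hb, hbn⟩ := hI.1 a b hab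
      rw [decRel_iff, hT2 b hb hbn]
      exact ⟨hba, (rel_iff_le_add_decSpan hI hba).1 hab⟩
    · intro hab
      have hb := bounds_of_inSub hab.2.2
      rw [decRel_iff, hT2 b (by omega) (by omega)] at hab
      exact (rel_iff_le_add_decSpan hI hba).2 hab.2

def mirror : BinTree → BinTree
  | leaf => leaf
  | node l r => node (mirror r) (mirror l)

@[simp] lemma size_mirror (T : BinTree) : (mirror T).size = T.size := by
  induction T with
  | leaf => rfl
  | node l r ihl ihr => simp only [mirror, size, ihl, ihr]; omega

lemma mirror_involutive : Function.Involutive mirror := by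
  intro T
  induction T with
  | leaf => rfl
  | node l r ihl ihr => simp only [mirror, ihl, ihr]

lemma Rot.mirror {T T' : BinTree} (h : Rot T T') : Rot (BinTree.mirror T') (BinTree.mirror T) := by
  induction h with
  | root A B C => exact Rot.root _ _ _
  | left R _ ih => exact Rot.right _ ih
  | right L _ ih => exact Rot.left _ ih

lemma TamariLE.mirror {T T' : BinTree} (h : TamariLE T T') :
    TamariLE (BinTree.mirror T') (BinTree.mirror T) := by
  induction h with
  | refl => exact .refl
  | tail _ hr ih => exact .head hr.mirror ih

lemma tamariLE_mirror_iff {T T' : BinTree} : TamariLE (mirror T) (mirror T') ↔ TamariLE T' T :=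
  ⟨fun h => by simpa only [mirror_involutive _] using h.mirror, TamariLE.mirror⟩

lemma inSub_of_inSub_mirror : ∀ {T : BinTree} {a b : ℕ}, inSub (mirror T) a b →
    inSub T (T.size + 1 - a) (T.size + 1 - b)
  | leaf, _, _, h => h.elim
  | node l r, a, b, h => by
    simp only [size]
    rcases h with ⟨hb, ha, han⟩ | h | ⟨ha, hb, h⟩
    · simp only [size_mirror] at hb ha han
      exact Or.inl ⟨by omega, by omega, by omega⟩
    · have := bounds_of_inSub h
      have := inSub_of_inSub_mirror h
      simp only [size_mirror] at *
      refine Or.inr (Or.inr ⟨by omega, by omega, ?_⟩)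
      rwa [show l.size + r.size + 1 + 1 - a - (l.size + 1) = r.size + 1 - a by omega,
        show l.size + r.size + 1 + 1 - b - (l.size + 1) = r.size + 1 - b by omega]
    · have := bounds_of_inSub h
      have := inSub_of_inSub_mirror h
      simp only [size_mirror] at *
      refine Or.inr (Or.inl ?_)
      rwa [show l.size + r.size + 1 + 1 - a = l.size + 1 - (a - (r.size + 1)) by omega,
        show l.size + r.size + 1 + 1 - b = l.size + 1 - (b - (r.size + 1)) by omega]

lemma inSub_mirror_iff {T : BinTree} {a b : ℕ} :
    inSub (mirror T) a b ↔ inSub T (T.size + 1 - a) (T.size + 1 - b) := by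
  refine ⟨inSub_of_inSub_mirror, fun h => ?_⟩
  have := bounds_of_inSub h
  have h' := inSub_of_inSub_mirror (T := mirror T) (by rwa [mirror_involutive])
  rwa [size_mirror, Nat.sub_sub_self (by omega), Nat.sub_sub_self (by omega)] at h'

lemma decRel_mirror_iff {T : BinTree} {a b : ℕ} :
    decRel (mirror T) a b ↔ incRel T (T.size + 1 - a) (T.size + 1 - b) := by
  simp only [decRel, incRel, bstRel, inSub_mirror_iff]
  constructor <;> rintro ⟨hlt, -, h⟩ <;> have := bounds_of_inSub h <;>
    exact ⟨by omega, by omega, h⟩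

lemma incRel_mirror_iff {T : BinTree} {a b : ℕ} :
    incRel (mirror T) a b ↔ decRel T (T.size + 1 - a) (T.size + 1 - b) := by
  simp only [decRel, incRel, bstRel, inSub_mirror_iff]
  constructor <;> rintro ⟨hlt, -, h⟩ <;> have := bounds_of_inSub h <;>
    exact ⟨by omega, by omega, h⟩

lemma IPrel_mirror_iff {n : ℕ} {T T' : BinTree} (hs : T.size = n) (hs' : T'.size = n)
    {a b : ℕ} :
    IPrel (mirror T') (mirror T) a b ↔ reflectRel n (IPrel T T') a b := by
  simp only [IPrel, reflectRel, decRel_mirror_iff, incRel_mirror_iff, hs, hs', or_comm]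

lemma isRelOn_IPrel {n : ℕ} {T T' : BinTree} (hs : T.size = n) (hs' : T'.size = n) :
    IsRelOn n (IPrel T T') := by
  rintro a b (⟨-, -, h⟩ | ⟨-, -, h⟩)
  · exact hs ▸ bounds_of_inSub h
  · exact hs' ▸ bounds_of_inSub h

theorem exists_upper_IPrel_iff {n : ℕ} {T1 T1' : BinTree} (h1 : T1.size = n)
    (h1' : T1'.size = n) {I : ℕ → ℕ → Prop} (hI : IsIntervalPoset n I) :
    (∃ T3 : BinTree, T3.size = n ∧ TamariLE T1 T3 ∧ TamariLE T3 T1' ∧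
        ∀ a b, I a b ↔ IPrel T1 T3 a b) ↔
      ((∀ a b, IPrel T1 T1' a b → I a b) ∧
        ∀ a b, I a b → ¬ IPrel T1 T1' a b → a < b) := by
  have hR := isRelOn_IPrel h1 h1'
  have key := exists_lower_IPrel_iff (T1 := mirror T1') (T1' := mirror T1)
    (by rwa [size_mirror]) (by rwa [size_mirror]) hI.reflectRel
  simp only [IPrel_mirror_iff h1 h1', forall_reflectRel_imp_reflectRel_iff hR hI.1,
    forall_reflectRel_not_imp_lt_iff hI.1 hR] at key
  rw [mirror_involutive.surjective.exists] at key
  simp only [size_mirror, tamariLE_mirror_iff] at key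
  rw [← key]
  refine exists_congr fun T3 => and_congr_right fun hs => ?_
  simp only [IPrel_mirror_iff h1 hs,
    forall_reflectRel_iff_reflectRel_iff hI.1 (isRelOn_IPrel h1 hs)]
  exact and_left_comm

end BinTree

theorem interval_minmax_inclusion_general (n : ℕ) (T1 T1' : BinTree)
    (h1 : T1.size = n) (h1' : T1'.size = n)
    (I : ℕ → ℕ → Prop) (hI : IsIntervalPoset n I) :
    ((∃ T2 : BinTree, T2.size = n ∧ TamariLE T1 T2 ∧ TamariLE T2 T1' ∧
        ∀ a b, I a b ↔ IPrel T2 T1' a b) ↔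
      ((∀ a b, IPrel T1 T1' a b → I a b) ∧
        ∀ a b, I a b → ¬ IPrel T1 T1' a b → b < a)) ∧
    ((∃ T3 : BinTree, T3.size = n ∧ TamariLE T1 T3 ∧ TamariLE T3 T1' ∧
        ∀ a b, I a b ↔ IPrel T1 T3 a b) ↔
      ((∀ a b, IPrel T1 T1' a b → I a b) ∧
        ∀ a b, I a b → ¬ IPrel T1 T1' a b → a < b)) :=
  ⟨exists_lower_IPrel_iff h1 h1' hI, exists_upper_IPrel_iff h1 h1' hI⟩

/-- Let `[T1,T1']` be a Tamari interval of size `n` with interval-poset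
`I1 = IP[T1,T1']` and let `I` be an interval-poset of size `n`. Then `I = IP[T2,T1']`
for some binary tree `T2` with `T1 ≤ T2 ≤ T1'` iff every relation of `I1` is a relation
of `I` and every new relation of `I` is decreasing; symmetrically `I = IP[T1,T3]` for some
`T3` with `T1 ≤ T3 ≤ T1'` iff every relation of `I1` is a relation of `I` and every new
relation of `I` is increasing. -/
theorem interval_minmax_inclusion (n : ℕ) (T1 T1' : BinTree)
    (h1 : T1.size = n) (h1' : T1'.size = n) (ht : TamariLE T1 T1')
    (I : ℕ → ℕ → Prop) (hI : IsIntervalPoset n I) :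
    ((∃ T2 : BinTree, T2.size = n ∧ TamariLE T1 T2 ∧ TamariLE T2 T1' ∧
        ∀ a b, I a b ↔ IPrel T2 T1' a b) ↔
      ((∀ a b, IPrel T1 T1' a b → I a b) ∧
        ∀ a b, I a b → ¬ IPrel T1 T1' a b → b < a)) ∧
    ((∃ T3 : BinTree, T3.size = n ∧ TamariLE T1 T3 ∧ TamariLE T3 T1' ∧
        ∀ a b, I a b ↔ IPrel T1 T3 a b) ↔
      ((∀ a b, IPrel T1 T1' a b → I a b) ∧
        ∀ a b, I a b → ¬ IPrel T1 T1' a b → a < b)) :=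
  interval_minmax_inclusion_general n T1 T1' h1 h1' I hI
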